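/- arXiv:1412.0231 — 4 statements merged into one kernel-verified Lean document; each statement's English description precedes it below -/
import Mathlib

section
/- Let (d_k, ..., d_0) be a 1089 (n,b)-palintiple (a symmetric (n,b)-palintiple with n+1 dividing b) with k+1 digits. Then there do not exist integers n̂, b̂ with 1 < n̂ < b̂ and a (k+3)-digit (n̂, b̂)-palintiple whose carries ĉ_0, ĉ_1, ..., ĉ_{k+3} satisfy ĉ_0 = 0, ĉ_j = d_{j−1} for 1 ≤ j ≤ k+1, and ĉ_{k+2} = 0 (i.e., no doubly-derived palintiple, with carry sequence (0, d_k, ..., d_0, 0), can be derived from a 1089 palintiple). -/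
open Finset Polynomial

/-- `d 0, ..., d k` are the `k+1` digits (least significant first) of an
`(n,b)`-palintiple. -/
def IsPalintiple (n b : ℤ) (k : ℕ) (d : ℕ → ℤ) : Prop :=
  1 < n ∧ n < b ∧ 1 ≤ k ∧
  (∀ j ≤ k, 0 ≤ d j ∧ d j ≤ b - 1) ∧ d k ≠ 0 ∧ d 0 ≠ 0 ∧
  (∑ j ∈ range (k + 1), d j * b ^ j) = n * ∑ j ∈ range (k + 1), d (k - j) * b ^ j

/-- `c 0, ..., c (k+1)` are the carries of the `(n,b)`-palintiple with digits
`d 0, ..., d k`. -/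
def IsCarries (n b : ℤ) (k : ℕ) (d c : ℕ → ℤ) : Prop :=
  c 0 = 0 ∧ ∀ j ≤ k, n * d (k - j) + c j = d j + b * c (j + 1)

/-- A palintiple with carries `c` is symmetric if `c j = c (k-j)`. -/
def IsSym (k : ℕ) (c : ℕ → ℤ) : Prop := ∀ j ≤ k, c j = c (k - j)

/-- A palintiple with carries `c` is shifted-symmetric if `c j = c (k-j+1)`. -/
def IsShiftedSym (k : ℕ) (c : ℕ → ℤ) : Prop := ∀ j ≤ k, c j = c (k - j + 1)

/-- A palintiple is asymmetric if it is neither symmetric nor shifted-symmetric. -/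
def IsAsym (k : ℕ) (c : ℕ → ℤ) : Prop := ¬ IsSym k c ∧ ¬ IsShiftedSym k c

/-!
Symmetry of the carries gives `c k = c 0 = 0`, hence `d k = n * d 0`. In a palintiple whose
last carry vanishes, the equations for the two outermost digit pairs determine
`(n² - 1) * d 0` and `(n² - 1) * d 1` as multiples of `b` up to carry terms, and eliminating
`b` gives `n² - 1 ∣ c 1 * (n * c (k - 1) + c 1)`. For the doubly-derived palintiple this reads
`n̂² - 1 ∣ d₀² (n n̂ + 1)`, hence `n̂² - 1 ∣ d₀² (n² - 1)` since `n̂² ≡ 1`. But the carry bound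
`n d₀ = ĉ (k + 1) < n̂` makes `0 < d₀² (n² - 1) < (n̂ - 1)² ≤ n̂² - 1`.
-/

namespace IsPalintiple

variable {n b : ℤ} {k : ℕ} {d c : ℕ → ℤ}

lemma carry_succ_eq_zero (hp : IsPalintiple n b k d) (hc : IsCarries n b k d c) :
    c (k + 1) = 0 := by
  obtain ⟨hn, hnb, -, -, -, -, hsum⟩ := hp
  obtain ⟨hc0, hrec⟩ := hc
  have htel : c (k + 1) * b ^ (k + 1) = 0 :=
    calc c (k + 1) * b ^ (k + 1)
        = ∑ j ∈ range (k + 1), (c (j + 1) * b ^ (j + 1) - c j * b ^ j) := by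
          rw [sum_range_sub (fun j => c j * b ^ j)]; simp [hc0]
      _ = ∑ j ∈ range (k + 1), (n * (d (k - j) * b ^ j) - d j * b ^ j) :=
          sum_congr rfl fun j hj =>
            by linear_combination (-b ^ j) * hrec j (Nat.lt_succ_iff.1 (mem_range.1 hj))
      _ = 0 := by rw [sum_sub_distrib, ← mul_sum, ← hsum, sub_self]
  exact (mul_eq_zero.1 htel).resolve_right (pow_ne_zero _ (by linarith))

lemma carry_le (hp : IsPalintiple n b k d) (hc : IsCarries n b k d c) :
    ∀ j ≤ k + 1, c j ≤ n - 1 := by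
  obtain ⟨hn, hnb, -, hd, -, -, -⟩ := hp
  obtain ⟨hc0, hrec⟩ := hc
  intro j
  induction j with
  | zero => intro _; linarith
  | succ i ih =>
    intro hi
    have hci := ih (by omega)
    have hdig := mul_le_mul_of_nonneg_left (hd (k - i) (by omega)).2 (by linarith : 0 ≤ n)
    by_contra! hlt
    have hcarry := mul_le_mul_of_nonneg_left (by linarith : n ≤ c (i + 1)) (by linarith : 0 ≤ b)
    linarith [hrec i (by omega), (hd i (by omega)).1]

lemma last_digit_eq (hp : IsPalintiple n b k d) (hc : IsCarries n b k d c) (hck : c k = 0) :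
    d k = n * d 0 := by
  have e := hc.2 k le_rfl
  rw [Nat.sub_self, hck, hp.carry_succ_eq_zero hc] at e
  linarith

lemma sq_sub_one_dvd (hp : IsPalintiple n b k d) (hc : IsCarries n b k d c) (hck : c k = 0) :
    n ^ 2 - 1 ∣ c 1 * (n * c (k - 1) + c 1) := by
  have hk : 1 ≤ k := hp.2.2.1
  obtain ⟨hc0, hrec⟩ := hc
  have hdk := hp.last_digit_eq ⟨hc0, hrec⟩ hck
  have e0 := hrec 0 (Nat.zero_le k)
  have e1 := hrec 1 hk
  have ek1 := hrec (k - 1) (Nat.sub_le k 1)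
  rw [Nat.sub_zero, hc0] at e0
  rw [Nat.sub_sub_self hk, Nat.sub_add_cancel hk, hck] at ek1
  exact ⟨c 2 * d 0 - c 1 * d 1, by
    linear_combination (n * c 1) * ek1 + c 1 * e1 - c 2 * e0 + (n * c 2) * hdk⟩

end IsPalintiple

lemma sq_sub_one_not_dvd_sq_mul_add_one {N m x : ℤ} (hx : 0 < x) (hm : 1 < m) (hlt : m * x < N) :
    ¬ N ^ 2 - 1 ∣ x ^ 2 * (m * N + 1) := by
  intro h
  have hmx : 0 < m * x := by positivity
  have h' : N ^ 2 - 1 ∣ x ^ 2 * (m ^ 2 - 1) := by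
    have : x ^ 2 * (m ^ 2 - 1)
        = x ^ 2 * (m * N + 1) * (m * N - 1) - (N ^ 2 - 1) * (x ^ 2 * m ^ 2) := by ring
    rw [this]
    exact dvd_sub (h.mul_right _) (dvd_mul_right _ _)
  have hpos : 0 < x ^ 2 * (m ^ 2 - 1) := mul_pos (pow_pos hx 2) (by nlinarith)
  have : N ^ 2 - 1 < N ^ 2 - 1 :=
    calc N ^ 2 - 1 ≤ x ^ 2 * (m ^ 2 - 1) := Int.le_of_dvd hpos h'
      _ < (m * x) ^ 2 := by nlinarith [pow_pos hx 2]
      _ ≤ (N - 1) ^ 2 := pow_le_pow_left₀ hmx.le (by omega) 2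
      _ ≤ N ^ 2 - 1 := by nlinarith
  exact lt_irrefl _ this

theorem no_doubly_derived_from_1089_general (n b : ℤ) (k : ℕ) (d c : ℕ → ℤ)
    (hp : IsPalintiple n b k d) (hc : IsCarries n b k d c)
    (hsym : IsSym k c) :
    ¬ ∃ (nh bh : ℤ) (dh ch : ℕ → ℤ),
        1 < nh ∧ nh < bh ∧
        IsPalintiple nh bh (k + 2) dh ∧ IsCarries nh bh (k + 2) dh ch ∧
        ch 0 = 0 ∧ (∀ j, 1 ≤ j → j ≤ k + 1 → ch j = d (j - 1)) ∧ ch (k + 2) = 0 := by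
  rintro ⟨nh, bh, dh, ch, -, -, hph, hch, -, hchd, hchk2⟩
  have hck : c k = 0 := by simpa [hc.1] using (hsym 0 (Nat.zero_le k)).symm
  have hd0 : 0 < d 0 := lt_of_le_of_ne (hp.2.2.2.1 0 (Nat.zero_le k)).1 (Ne.symm hp.2.2.2.2.2.1)
  have hch1 : ch 1 = d 0 := hchd 1 le_rfl (by omega)
  have hchk1 : ch (k + 1) = n * d 0 := by
    rw [hchd (k + 1) (by omega) le_rfl, Nat.add_sub_cancel, hp.last_digit_eq hc hck]
  have hlt : n * d 0 < nh := by linarith [hph.carry_le hch (k + 1) (by omega)]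
  have hdvd := hph.sq_sub_one_dvd hch hchk2
  rw [show k + 2 - 1 = k + 1 by omega, hchk1, hch1] at hdvd
  exact sq_sub_one_not_dvd_sq_mul_add_one hd0 hp.1 hlt (by convert hdvd using 1; ring)

/-- **Theorem.** No doubly-derived palintiple (carry sequence `(0, d k, ..., d 0, 0)`)
can be derived from a 1089 palintiple. -/
theorem no_doubly_derived_from_1089 (n b : ℤ) (k : ℕ) (d c : ℕ → ℤ)
    (hp : IsPalintiple n b k d) (hc : IsCarries n b k d c)
    (hsym : IsSym k c) (hdvd : n + 1 ∣ b) :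
    ¬ ∃ (nh bh : ℤ) (dh ch : ℕ → ℤ),
        1 < nh ∧ nh < bh ∧
        IsPalintiple nh bh (k + 2) dh ∧ IsCarries nh bh (k + 2) dh ch ∧
        ch 0 = 0 ∧ (∀ j, 1 ≤ j → j ≤ k + 1 → ch j = d (j - 1)) ∧ ch (k + 2) = 0 :=
  no_doubly_derived_from_1089_general n b k d c hp hc hsym
end

section
/- Let (d_k, ..., d_0) be a shifted-symmetric (n,b)-palintiple with carries c_0, ..., c_{k+1}, and let D = gcd(d_0, b²−1). Suppose n²−1 divides D·c_j for all 0 ≤ j ≤ k, and write q_j = D·c_j/(n²−1). Then for every integer α ≥ 1 such that D divides α(b·d_{k−j+2} + d_j) − (n·q_j + q_{j−1}) for all 0 ≤ j ≤ k (with the conventions d_m = 0 and q_m = 0 whenever m < 0 or m > k), there exists an asymmetric (k+3)-digit (b, b̂)-palintiple with b̂ = α(b²−1)/D, whose carries ĉ_0, ..., ĉ_{k+3} satisfy ĉ_0 = 0, ĉ_j = d_{j−1} for 1 ≤ j ≤ k+1, and ĉ_{k+2} = 0 (carry sequence (0, d_k, ..., d_0, 0)). -/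
open Finset Polynomial

/-!
Shifted symmetry lets one eliminate `d (k - j)` between the carry recurrences at `j` and
`k - j`, giving `(n ^ 2 - 1) * d j = (b - n) * c (j + 1) + (n * b - 1) * c j`.

The new palintiple is built from its prescribed carries `e = (0, d 0, ..., d k, 0)`: its digits
are forced to be `digitNumerator b b̂ (k + 2) e j / (b ^ 2 - 1)`, and the digit formula turns the
part `b * e (k + 2 - j) + e j` of that numerator into `(b ^ 2 - 1) / D * (n * q j + q (j - 1))`.
So the divisibility assumed of `α` says exactly that digits `0, ..., k` are integers; the last two
follow by reflection. The digits lie in `[0, b̂ - 1]` because `e` never jumps between `0` and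
`b - 1`, and the carries are asymmetric because `d` is not a palindrome and `d 0 ≠ 0`.
-/

section Palintiple

variable {n b : ℤ} {k : ℕ} {d c : ℕ → ℤ}

theorem IsCarries.bounds (hp : IsPalintiple n b k d) (hc : IsCarries n b k d c) :
    ∀ j ≤ k + 1, 0 ≤ c j ∧ c j ≤ n - 1 := by
  obtain ⟨hn, hnb, -, hdig, -⟩ := hp
  intro j hj
  induction j with
  | zero => rw [hc.1]; omega
  | succ j ih =>
    obtain ⟨ih₀, ih₁⟩ := ih (by omega)
    have hrec := hc.2 j (by omega)
    obtain ⟨hdj₀, hdj₁⟩ := hdig j (by omega)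
    obtain ⟨hdr₀, hdr₁⟩ := hdig (k - j) (by omega)
    constructor <;> by_contra! h <;> nlinarith

/-- The carries telescope:
`d j * b ^ j = n * d (k - j) * b ^ j + (c j * b ^ j - c (j + 1) * b ^ (j + 1))`. -/
theorem IsCarries.sum_eq_mul_sum_reverse (hc : IsCarries n b k d c) (hck : c (k + 1) = 0) :
    ∑ j ∈ range (k + 1), d j * b ^ j = n * ∑ j ∈ range (k + 1), d (k - j) * b ^ j := by
  have hterm : ∀ j ∈ range (k + 1), d j * b ^ j
      = n * (d (k - j) * b ^ j) + (c j * b ^ j - c (j + 1) * b ^ (j + 1)) := by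
    intro j hj
    linear_combination (-(b ^ j)) * hc.2 j (Nat.lt_succ_iff.mp (mem_range.mp hj))
  rw [sum_congr rfl hterm, sum_add_distrib, sum_range_sub', hc.1, hck, mul_sum]
  ring

theorem IsPalintiple.not_palindrome (hp : IsPalintiple n b k d) :
    ¬ ∀ j ≤ k, d j = d (k - j) := by
  obtain ⟨hn, hnb, -, hdig, -, hd0, hsum⟩ := hp
  intro hpal
  set S := ∑ j ∈ range (k + 1), d j * b ^ j
  have hS : S = n * S := hsum.trans <| congrArg (n * ·) <|
    sum_congr rfl fun j hj => by rw [← hpal j (Nat.lt_succ_iff.mp (mem_range.mp hj))]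
  have hS_pos : 0 < S := by
    refine lt_of_lt_of_le ?_ (single_le_sum (f := fun j => d j * b ^ j)
      (fun j hj => mul_nonneg (hdig j (Nat.lt_succ_iff.mp (mem_range.mp hj))).1
        (pow_nonneg (by omega) j)) (mem_range.mpr k.succ_pos))
    have := (hdig 0 k.zero_le).1
    simp only [pow_zero, mul_one]
    omega
  nlinarith

theorem IsShiftedSym.carry_succ_eq_zero (hc : IsCarries n b k d c) (hss : IsShiftedSym k c) :
    c (k + 1) = 0 := by
  simpa [hc.1] using (hss 0 k.zero_le).symm

theorem IsShiftedSym.digit_formula (hc : IsCarries n b k d c) (hss : IsShiftedSym k c) {j : ℕ}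
    (hj : j ≤ k) : (n ^ 2 - 1) * d j = (b - n) * c (j + 1) + (n * b - 1) * c j := by
  have hrec := hc.2 j hj
  have hrec' := hc.2 (k - j) (Nat.sub_le k j)
  have hsj := hss j hj
  have hsj' := hss (k - j) (Nat.sub_le k j)
  rw [Nat.sub_sub_self hj] at hrec' hsj'
  rw [hsj', ← hsj] at hrec'
  linear_combination n * hrec' + hrec

theorem IsShiftedSym.carries_of_digit_eq_zero (hp : IsPalintiple n b k d)
    (hc : IsCarries n b k d c) (hss : IsShiftedSym k c) {j : ℕ} (hj : j ≤ k)
    (hd : d j = 0) :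
    c j = 0 ∧ c (j + 1) = 0 := by
  have hform := hss.digit_formula hc hj
  obtain ⟨hc₀, -⟩ := hc.bounds hp j (by omega)
  obtain ⟨hc₀', -⟩ := hc.bounds hp (j + 1) (by omega)
  obtain ⟨hn, hnb, -⟩ := hp
  have hnb₁ : 0 < n * b - 1 := by nlinarith
  have h₁ := mul_nonneg hnb₁.le hc₀
  have h₂ := mul_nonneg (sub_nonneg.mpr hnb.le) hc₀'
  rw [hd, mul_zero] at hform
  exact ⟨(mul_eq_zero.mp (by linarith : (n * b - 1) * c j = 0)).resolve_left hnb₁.ne',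
    (mul_eq_zero.mp (by linarith : (b - n) * c (j + 1) = 0)).resolve_left (by omega)⟩

theorem IsShiftedSym.carries_of_digit_eq_pred (hp : IsPalintiple n b k d)
    (hc : IsCarries n b k d c) (hss : IsShiftedSym k c) {j : ℕ} (hj : j ≤ k)
    (hd : d j = b - 1) :
    c j = n - 1 ∧ c (j + 1) = n - 1 := by
  have hform := hss.digit_formula hc hj
  obtain ⟨-, hc₁⟩ := hc.bounds hp j (by omega)
  obtain ⟨-, hc₁'⟩ := hc.bounds hp (j + 1) (by omega)
  obtain ⟨hn, hnb, -⟩ := hp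
  have hnb₁ : 0 < n * b - 1 := by nlinarith
  have h₁ := mul_nonneg hnb₁.le (sub_nonneg.mpr hc₁)
  have h₂ := mul_nonneg (sub_nonneg.mpr hnb.le) (sub_nonneg.mpr hc₁')
  rw [hd] at hform
  have hdef : (n * b - 1) * (n - 1 - c j) + (b - n) * (n - 1 - c (j + 1)) = 0 := by
    linear_combination hform
  have e₁ := (mul_eq_zero.mp (by linarith : (n * b - 1) * (n - 1 - c j) = 0)).resolve_left
    hnb₁.ne'
  have e₂ := (mul_eq_zero.mp (by linarith : (b - n) * (n - 1 - c (j + 1)) = 0)).resolve_left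
    (by omega)
  omega

end Palintiple

def derivedCarries (k : ℕ) (d : ℕ → ℤ) (j : ℕ) : ℤ :=
  if 1 ≤ j ∧ j ≤ k + 1 then d (j - 1) else 0

section DerivedCarries

variable {n b : ℤ} {k : ℕ} {d c : ℕ → ℤ}

@[simp]
theorem derivedCarries_zero : derivedCarries k d 0 = 0 := rfl

theorem derivedCarries_of_le {j : ℕ} (h₁ : 1 ≤ j) (h₂ : j ≤ k + 1) :
    derivedCarries k d j = d (j - 1) :=
  if_pos ⟨h₁, h₂⟩

theorem derivedCarries_of_lt {j : ℕ} (h : k + 1 < j) : derivedCarries k d j = 0 :=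
  if_neg (by omega)

theorem derivedCarries_succ {j : ℕ} (h : j ≤ k) : derivedCarries k d (j + 1) = d j :=
  derivedCarries_of_le (by omega) (by omega)

theorem derivedCarries_bounds (hdig : ∀ j ≤ k, 0 ≤ d j ∧ d j ≤ b - 1) (hb : 1 ≤ b)
    (j : ℕ) :
    0 ≤ derivedCarries k d j ∧ derivedCarries k d j ≤ b - 1 := by
  unfold derivedCarries
  split_ifs with h
  · exact hdig (j - 1) (by omega)
  · omega

theorem derivedCarries_isAsym (hp : IsPalintiple n b k d) :
    IsAsym (k + 2) (derivedCarries k d) := by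
  refine ⟨fun hsym => hp.not_palindrome fun j hj => ?_, fun hss => hp.2.2.2.2.2.1 ?_⟩
  · have h := hsym (j + 1) (by omega)
    rwa [derivedCarries_succ hj, show k + 2 - (j + 1) = k - j + 1 by omega,
      derivedCarries_succ (Nat.sub_le k j)] at h
  · have h := hss 1 (by omega)
    rwa [derivedCarries_succ (Nat.zero_le k), derivedCarries_of_lt (by omega)] at h

/-- A digit `0` of `d` forces both adjacent carries of `c` to be `0`, a digit `b - 1` forces both to
be `n - 1`, and `c 0 = c (k + 1) = 0`. -/
theorem IsShiftedSym.derivedCarries_not_jump (hp : IsPalintiple n b k d)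
    (hc : IsCarries n b k d c) (hss : IsShiftedSym k c) (i : ℕ) :
    ¬ (derivedCarries k d i = b - 1 ∧ derivedCarries k d (i + 1) = 0) ∧
      ¬ (derivedCarries k d i = 0 ∧ derivedCarries k d (i + 1) = b - 1) := by
  have hn : 1 < n := hp.1
  have hb : 1 < b := hp.1.trans hp.2.1
  have hck := hss.carry_succ_eq_zero hc
  constructor
  · rintro ⟨hi, hi'⟩
    have hi₁ : 1 ≤ i ∧ i ≤ k + 1 := by
      by_contra h; rw [derivedCarries, if_neg h] at hi; omega
    obtain ⟨j, rfl⟩ : ∃ j, i = j + 1 := ⟨i - 1, by omega⟩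
    rw [derivedCarries_succ (by omega)] at hi
    have hcj := (hss.carries_of_digit_eq_pred hp hc (by omega) hi).2
    rcases (show j + 1 = k + 1 ∨ j + 1 ≤ k by omega) with hj | hj
    · rw [hj, hck] at hcj; omega
    · rw [derivedCarries_succ hj] at hi'
      have := (hss.carries_of_digit_eq_zero hp hc hj hi').1
      omega
  · rintro ⟨hi, hi'⟩
    have hi₁ : i ≤ k := by
      by_contra h; rw [derivedCarries_of_lt (by omega)] at hi'; omega
    rw [derivedCarries_succ hi₁] at hi'
    have hcj := (hss.carries_of_digit_eq_pred hp hc hi₁ hi').1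
    rcases i with _ | j
    · rw [hc.1] at hcj; omega
    · rw [derivedCarries_succ (by omega)] at hi
      have := (hss.carries_of_digit_eq_zero hp hc (by omega) hi).2
      omega

theorem IsShiftedSym.derivedCarries_reflect_add (hc : IsCarries n b k d c) (hss : IsShiftedSym k c)
    {j : ℕ} (hj : j ≤ k + 1) :
    (n ^ 2 - 1) * (b * derivedCarries k d (k + 2 - j) + derivedCarries k d j)
      = (b ^ 2 - 1) * (n * c j + c (j - 1)) := by
  rcases j with _ | j
  · simp [derivedCarries_of_lt, hc.1]
  rw [show k + 2 - (j + 1) = k - j + 1 by omega, derivedCarries_succ (by omega),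
    derivedCarries_succ (by omega), Nat.add_sub_cancel]
  have hd := hss.digit_formula hc (j := j) (by omega)
  have hd' := hss.digit_formula hc (j := k - j) (by omega)
  have hs := hss j (by omega)
  have hs' : c (k - j) = c (j + 1) := by
    rcases (show j = k ∨ j + 1 ≤ k by omega) with rfl | hjk
    · rw [Nat.sub_self, hc.1, hss.carry_succ_eq_zero hc]
    · simpa [show k - (j + 1) + 1 = k - j by omega] using (hss (j + 1) hjk).symm
  rw [← hs, hs'] at hd'
  linear_combination b * hd' + hd

end DerivedCarries

/-- `(m ^ 2 - 1)` times digit `j` of a `(K+1)`-digit `(m, B)`-palintiple with carries `e`: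
adding `m` times the carry recurrence at `K - j` to the one at `j` eliminates digit `K - j`. -/
def digitNumerator (m B : ℤ) (K : ℕ) (e : ℕ → ℤ) (j : ℕ) : ℤ :=
  B * (m * e (K + 1 - j) + e (j + 1)) - (m * e (K - j) + e j)

section DigitNumerator

variable {m B : ℤ} {K : ℕ} {e : ℕ → ℤ}

theorem digitNumerator_reflect {j : ℕ} (hj : j ≤ K) :
    m * digitNumerator m B K e j - digitNumerator m B K e (K - j)
      = (m ^ 2 - 1) * (B * e (K + 1 - j) - e (K - j)) := by
  unfold digitNumerator
  rw [show K + 1 - (K - j) = j + 1 by omega, Nat.sub_sub_self hj,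
    show K - j + 1 = K + 1 - j by omega]
  ring

theorem dvd_digitNumerator_reflect {j : ℕ} (hj : j ≤ K)
    (h : m ^ 2 - 1 ∣ digitNumerator m B K e j) :
    m ^ 2 - 1 ∣ digitNumerator m B K e (K - j) := by
  have := dvd_sub (h.mul_left m) (dvd_mul_right (m ^ 2 - 1) (B * e (K + 1 - j) - e (K - j)))
  rwa [← digitNumerator_reflect hj, sub_sub_cancel] at this

theorem dvd_digitNumerator_of_forall_le {L : ℕ} (hKL : K ≤ 2 * L + 1)
    (h : ∀ j ≤ L, m ^ 2 - 1 ∣ digitNumerator m B K e j) :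
    ∀ j ≤ K, m ^ 2 - 1 ∣ digitNumerator m B K e j := by
  intro j hj
  rcases le_or_gt j L with hjL | hjL
  · exact h j hjL
  · simpa [Nat.sub_sub_self hj] using
      dvd_digitNumerator_reflect (Nat.sub_le K j) (h (K - j) (by omega))

theorem isCarries_of_digitNumerator {dh : ℕ → ℤ} (hm : m ^ 2 - 1 ≠ 0) (he : e 0 = 0)
    (hdh : ∀ j ≤ K, (m ^ 2 - 1) * dh j = digitNumerator m B K e j) : IsCarries m B K dh e := by
  refine ⟨he, fun j hj => mul_left_cancel₀ hm ?_⟩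
  have hr := digitNumerator_reflect (m := m) (B := B) (e := e) (Nat.sub_le K j)
  rw [Nat.sub_sub_self hj, show K + 1 - (K - j) = j + 1 by omega] at hr
  linear_combination m * hdh (K - j) (Nat.sub_le K j) - hdh j hj + hr

/-- `m * e (K + 1 - j) + e (j + 1)` and `m * e (K - j) + e j` are two-digit numbers in base `m`,
so digit `j` could only reach `-1` or `B` if `e j, e (j + 1)` jumped between `m - 1` and `0`. -/
theorem bounds_of_mul_eq_digitNumerator {x : ℤ} {j : ℕ} (hm : 1 < m) (hB : 0 < B)
    (he : ∀ i, 0 ≤ e i ∧ e i ≤ m - 1)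
    (hjump : ∀ i, ¬ (e i = m - 1 ∧ e (i + 1) = 0) ∧ ¬ (e i = 0 ∧ e (i + 1) = m - 1))
    (hx : (m ^ 2 - 1) * x = digitNumerator m B K e j) : 0 ≤ x ∧ x ≤ B - 1 := by
  unfold digitNumerator at hx
  obtain ⟨a₀, a₁⟩ := he (K + 1 - j)
  obtain ⟨b₀, b₁⟩ := he (j + 1)
  obtain ⟨c₀, c₁⟩ := he (K - j)
  obtain ⟨d₀, d₁⟩ := he j
  have hA : m * e (K + 1 - j) ≤ m * (m - 1) := mul_le_mul_of_nonneg_left a₁ (by omega)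
  have hC : m * e (K - j) ≤ m * (m - 1) := mul_le_mul_of_nonneg_left c₁ (by omega)
  have hA₀ : 0 ≤ m * e (K + 1 - j) := mul_nonneg (by omega) a₀
  have hC₀ : 0 ≤ m * e (K - j) := mul_nonneg (by omega) c₀
  constructor
  · by_contra! hneg
    have hlow : B * (m * e (K + 1 - j) + e (j + 1)) ≤ 0 := by nlinarith
    have hA0 : m * e (K + 1 - j) + e (j + 1) ≤ 0 := by nlinarith
    exact (hjump j).1 ⟨by nlinarith, by omega⟩
  · by_contra! hpos
    have hhigh :
        B * (m ^ 2 - 1) ≤ B * (m * e (K + 1 - j) + e (j + 1)) - (m * e (K - j) + e j) := by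
      nlinarith
    have hAM : B * (m * e (K + 1 - j) + e (j + 1)) ≤ B * (m ^ 2 - 1) :=
      mul_le_mul_of_nonneg_left (by nlinarith) hB.le
    have hAM' : m ^ 2 - 1 ≤ m * e (K + 1 - j) + e (j + 1) := by nlinarith
    exact (hjump j).2 ⟨by omega, by nlinarith⟩

end DigitNumerator

section Derived

variable {n b : ℤ} {k : ℕ} {d c : ℕ → ℤ}

theorem IsShiftedSym.dvd_digitNumerator (hn : 1 < n) (hc : IsCarries n b k d c)
    (hss : IsShiftedSym k c) {D α : ℤ} {q : ℕ → ℤ} (hDb : D ∣ b ^ 2 - 1)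
    (hq : ∀ j ≤ k, (n ^ 2 - 1) * q j = D * c j)
    (hα : ∀ j ≤ k, D ∣ α * (b * (if 2 ≤ j then d (k - j + 2) else 0) + d j)
      - (n * q j + q (j - 1)))
    {j : ℕ} (hj : j ≤ k) :
    b ^ 2 - 1 ∣ digitNumerator b (α * ((b ^ 2 - 1) / D)) (k + 2) (derivedCarries k d) j := by
  set E := (b ^ 2 - 1) / D
  have hED : E * D = b ^ 2 - 1 := Int.ediv_mul_cancel hDb
  have hn' : n ^ 2 - 1 ≠ 0 := by nlinarith
  have hlow : b * derivedCarries k d (k + 2 - j) + derivedCarries k d j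
      = E * (n * q j + q (j - 1)) := by
    refine mul_left_cancel₀ hn' ?_
    rw [hss.derivedCarries_reflect_add hc (by omega)]
    linear_combination (-(E * n)) * hq j hj - E * hq (j - 1) (by omega)
      - (n * c j + c (j - 1)) * hED
  have hhigh : b * derivedCarries k d (k + 2 + 1 - j) + derivedCarries k d (j + 1)
      = b * (if 2 ≤ j then d (k - j + 2) else 0) + d j := by
    rw [derivedCarries_succ hj]
    split_ifs with h2
    · rw [derivedCarries_of_le (by omega) (by omega), show k + 2 + 1 - j - 1 = k - j + 2 by omega]
    · rw [derivedCarries_of_lt (by omega)]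
  obtain ⟨t, ht⟩ := hα j hj
  refine ⟨t, ?_⟩
  rw [digitNumerator, hhigh, hlow, ← hED]
  linear_combination E * ht

theorem IsShiftedSym.derived_isPalintiple (hp : IsPalintiple n b k d) (hc : IsCarries n b k d c)
    (hss : IsShiftedSym k c) {B : ℤ} {dh : ℕ → ℤ} (hbB : b < B)
    (hdh : ∀ j ≤ k + 2,
      (b ^ 2 - 1) * dh j = digitNumerator b B (k + 2) (derivedCarries k d) j) :
    IsPalintiple b B (k + 2) dh ∧ IsCarries b B (k + 2) dh (derivedCarries k d) := by
  have hjump := hss.derivedCarries_not_jump hp hc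
  obtain ⟨hn, hnb, -, hdig, -, hd0, -⟩ := hp
  have hb : 1 < b := hn.trans hnb
  have hcar := isCarries_of_digitNumerator (by nlinarith) derivedCarries_zero hdh
  have hdh₀ : (b ^ 2 - 1) * dh 0 = B * d 0 := by
    rw [hdh 0 (by omega)]
    simp [digitNumerator, derivedCarries_of_lt, derivedCarries_succ]
  have hdh₀_ne : dh 0 ≠ 0 := by
    rintro h
    rw [h, mul_zero] at hdh₀
    exact mul_ne_zero (by omega) hd0 hdh₀.symm
  have hdh_last : dh (k + 2) = b * dh 0 := by
    have := hcar.2 (k + 2) le_rfl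
    simp only [Nat.sub_self, derivedCarries_of_lt (show k + 1 < k + 2 by omega),
      derivedCarries_of_lt (show k + 1 < k + 2 + 1 by omega)] at this
    linarith
  refine ⟨⟨hb, hbB, by omega, fun j hj => ?_, ?_, hdh₀_ne,
    hcar.sum_eq_mul_sum_reverse (derivedCarries_of_lt (by omega))⟩, hcar⟩
  · exact bounds_of_mul_eq_digitNumerator hb (by omega) (derivedCarries_bounds hdig hb.le)
      hjump (hdh j hj)
  · rw [hdh_last]
    exact mul_ne_zero (by omega) hdh₀_ne

end Derived

theorem lt_div_gcd_sq_sub_one {b x : ℤ} (hx : 0 < x) (hxb : x ≤ b - 1) :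
    b < (b ^ 2 - 1) / Int.gcd x (b ^ 2 - 1) := by
  have hD : 0 < (Int.gcd x (b ^ 2 - 1) : ℤ) := by
    exact_mod_cast Int.gcd_pos_of_ne_zero_left _ hx.ne'
  have hDx : (Int.gcd x (b ^ 2 - 1) : ℤ) ≤ x := Int.le_of_dvd hx (Int.gcd_dvd_left _ _)
  have hED := Int.ediv_mul_cancel (Int.gcd_dvd_right x (b ^ 2 - 1))
  by_contra! h
  nlinarith

/-- **Theorem (Pudwell palintiples).** Doubly-derived palintiples constructed from a
shifted-symmetric `(n,b)`-palintiple, with carry sequence `(0, d k, ..., d 0, 0)`. -/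
theorem doubly_derived_from_shifted_symmetric (n b : ℤ) (k : ℕ) (d c : ℕ → ℤ)
    (hp : IsPalintiple n b k d) (hc : IsCarries n b k d c)
    (hss : IsShiftedSym k c)
    (D : ℤ) (hD : D = Int.gcd (d 0) (b ^ 2 - 1))
    (hdvd : ∀ j ≤ k, n ^ 2 - 1 ∣ D * c j)
    (q : ℕ → ℤ) (hq : ∀ j ≤ k, q j = D * c j / (n ^ 2 - 1)) :
    ∀ α : ℤ, 1 ≤ α →
      (∀ j ≤ k, D ∣ α * (b * (if 2 ≤ j then d (k - j + 2) else 0) + d j)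
        - (n * q j + q (j - 1))) →
      ∃ dh ch : ℕ → ℤ,
        IsPalintiple b (α * ((b ^ 2 - 1) / D)) (k + 2) dh ∧
        IsCarries b (α * ((b ^ 2 - 1) / D)) (k + 2) dh ch ∧
        IsAsym (k + 2) ch ∧
        ch 0 = 0 ∧ (∀ j, 1 ≤ j → j ≤ k + 1 → ch j = d (j - 1)) ∧ ch (k + 2) = 0 := by
  intro α hα hαdvd
  obtain ⟨hd₀, hd₀'⟩ := hp.2.2.2.1 0 k.zero_le
  have hbB : b < α * ((b ^ 2 - 1) / D) := by
    have := lt_div_gcd_sq_sub_one (lt_of_le_of_ne hd₀ (Ne.symm hp.2.2.2.2.2.1)) hd₀'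
    rw [← hD] at this
    nlinarith
  have hq' : ∀ j ≤ k, (n ^ 2 - 1) * q j = D * c j := fun j hj =>
    hq j hj ▸ Int.mul_ediv_cancel' (hdvd j hj)
  have hN : ∀ j ≤ k + 2, b ^ 2 - 1
      ∣ digitNumerator b (α * ((b ^ 2 - 1) / D)) (k + 2) (derivedCarries k d) j :=
    dvd_digitNumerator_of_forall_le (L := k) (by have := hp.2.2.1; omega) fun j hj =>
      hss.dvd_digitNumerator hp.1 hc (hD ▸ Int.gcd_dvd_right _ _) hq' hαdvd hj
  obtain ⟨hpal, hcar⟩ := hss.derived_isPalintiple hp hc hbB fun j hj =>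
    Int.mul_ediv_cancel' (hN j hj)
  exact ⟨_, _, hpal, hcar, derivedCarries_isAsym hp, derivedCarries_zero,
    fun j h₁ h₂ => derivedCarries_of_le h₁ h₂, derivedCarries_of_lt (by omega)⟩
end

section
/- Let (d_1, d_0) be a 2-digit (n,b)-palintiple. If there exists an integer n̂ > max{d_0, d_1} such that (nb−1) divides n̂(b−n), with s = n̂(b−n)/(nb−1), and s·d_0 ≡ d_1 (mod n̂−1), then for every integer α ≥ 1 there exists an asymmetric 3-digit (n̂, b̂)-palintiple with b̂ = s + α(n̂²−1)/gcd(d_1, n̂²−1), whose carries ĉ_0, ĉ_1, ĉ_2, ĉ_3 satisfy ĉ_0 = 0, ĉ_1 = d_1, ĉ_2 = d_0, ĉ_3 = 0 (carry sequence (d_0, d_1, 0)). -/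
open Finset Polynomial

/- Prescribing the carries `(0, d 1, d 0, 0)` forces the digits
`(e, (b̂ d 0 - d 1) / (n̂ - 1), n̂ e + d 0)` and leaves one carry equation,
`n̂ (n̂ e + d 0) = e + b̂ d 1`. Since `n̂ d 0 = s d 1`, it reads `e (n̂² - 1) = (b̂ - s) d 1`, which
`b̂ - s = α (n̂² - 1) / g` and `e = α d 1 / g` solve, `g = gcd (d 1) (n̂² - 1)`. As `g` is prime
to `n̂` and divides `n̂ d 0`, it divides `d 0`; hence `b̂ d 0 - d 1 ≡ s d 0 - d 1 ≡ 0 (mod n̂ - 1)`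
and the middle digit is an integer. -/

theorem IsCarries.sum_eq {n b : ℤ} {k : ℕ} {d c : ℕ → ℤ} (h : IsCarries n b k d c)
    (hck : c (k + 1) = 0) :
    ∑ j ∈ range (k + 1), d j * b ^ j = n * ∑ j ∈ range (k + 1), d (k - j) * b ^ j := by
  have hsum : ∑ j ∈ range (k + 1), (n * d (k - j) + c j) * b ^ j =
      ∑ j ∈ range (k + 1), (d j + b * c (j + 1)) * b ^ j :=
    sum_congr rfl fun j hj => by rw [h.2 j (Nat.lt_succ_iff.mp (mem_range.mp hj))]
  have hshift : ∑ j ∈ range (k + 1), c j * b ^ j =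
      ∑ j ∈ range (k + 1), c (j + 1) * b ^ (j + 1) := by
    rw [sum_range_succ', sum_range_succ, h.1, hck]
    simp only [zero_mul, add_zero]
  have hc : ∑ j ∈ range (k + 1), b * c (j + 1) * b ^ j =
      ∑ j ∈ range (k + 1), c (j + 1) * b ^ (j + 1) :=
    sum_congr rfl fun j _ => by ring
  simp only [add_mul, sum_add_distrib] at hsum
  rw [hc, ← hshift] at hsum
  rw [mul_sum]
  simp only [mul_assoc] at hsum
  linarith

namespace IsPalintiple

variable {n b : ℤ} {d : ℕ → ℤ}

theorem two_digit_eq (hp : IsPalintiple n b 1 d) :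
    d 1 * (b - n) = d 0 * (n * b - 1) := by
  have h := hp.2.2.2.2.2.2
  simp only [sum_range_succ, sum_range_zero] at h
  norm_num at h
  linarith

theorem digit_zero_pos {k : ℕ} (hp : IsPalintiple n b k d) :
    0 < d 0 :=
  (hp.2.2.2.1 0 k.zero_le).1.lt_of_ne' hp.2.2.2.2.2.1

theorem digit_last_pos {k : ℕ} (hp : IsPalintiple n b k d) :
    0 < d k :=
  (hp.2.2.2.1 k le_rfl).1.lt_of_ne' hp.2.2.2.2.1

theorem two_digit_lt (hp : IsPalintiple n b 1 d) :
    d 0 < d 1 := by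
  have h : (d 1 - d 0) * (b - n) = d 0 * ((n - 1) * (b + 1)) := by
    linear_combination hp.two_digit_eq
  have hpos : 0 < (d 1 - d 0) * (b - n) :=
    h ▸ mul_pos hp.digit_zero_pos (mul_pos (sub_pos.2 hp.1) (by linarith [hp.1, hp.2.1]))
  linarith [pos_of_mul_pos_left hpos (sub_pos.2 hp.2.1).le]

theorem mul_digit_zero_eq {m : ℤ} (hp : IsPalintiple n b 1 d)
    (hdvd : n * b - 1 ∣ m * (b - n)) :
    m * d 0 = m * (b - n) / (n * b - 1) * d 1 := by
  refine mul_left_cancel₀ (show n * b - 1 ≠ 0 by nlinarith [hp.1, hp.2.1]) ?_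
  linear_combination -m * hp.two_digit_eq - d 1 * Int.ediv_mul_cancel hdvd

end IsPalintiple

theorem isAsym_two {c : ℕ → ℤ} (h02 : c 0 ≠ c 2) (h12 : c 1 ≠ c 2) : IsAsym 2 c :=
  ⟨fun h => h02 (h 0 (by norm_num)), fun h => h12 (h 1 (by norm_num))⟩

/-- The digits are `(e, (b c₀ - c₁) / (n - 1), n e + c₀)`; `heq` is the carry equation at
position `0`. -/
theorem exists_three_digit_of_carries {n b c₀ c₁ e : ℤ} (hc₀ : 0 < c₀) (hc₀₁ : c₀ < c₁)
    (hc₁ : c₁ < n) (he : 0 < e) (hb : n * e + c₀ < b) (heq : n * (n * e + c₀) = e + b * c₁)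
    (hdvd : n - 1 ∣ b * c₀ - c₁) :
    ∃ dh ch : ℕ → ℤ, IsPalintiple n b 2 dh ∧ IsCarries n b 2 dh ch ∧ IsAsym 2 ch ∧
      ch 0 = 0 ∧ ch 1 = c₁ ∧ ch 2 = c₀ ∧ ch 3 = 0 := by
  obtain ⟨x, hx⟩ := hdvd
  have hnb : n < b := by nlinarith
  have hx_pos : 0 < x := pos_of_mul_pos_right (show 0 < (n - 1) * x by nlinarith) (by linarith)
  have hx_lt : x < b := by nlinarith
  have hcarries : IsCarries n b 2 ([e, x, n * e + c₀].getD · 0) ([0, c₁, c₀].getD · 0) := by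
    refine ⟨rfl, fun j hj => ?_⟩
    interval_cases j <;>
      simp only [Nat.reduceSub, Nat.reduceAdd, List.getD_cons_succ, List.getD_cons_zero,
        List.getD_nil] <;> linarith
  refine ⟨_, _, ⟨by linarith, hnb, by norm_num, fun j hj => ?_, ?_, he.ne', ?_⟩,
    hcarries, isAsym_two (by simpa using hc₀.ne) (by simpa using hc₀₁.ne'), rfl, rfl, rfl, rfl⟩
  · interval_cases j <;> simp only [List.getD_cons_succ, List.getD_cons_zero] <;>
      constructor <;> nlinarith
  · simp only [List.getD_cons_succ, List.getD_cons_zero]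
    nlinarith
  · exact hcarries.sum_eq rfl

theorem dvd_of_dvd_mul_of_gcd_sq_sub_one {a b m : ℤ} (h : a ∣ m * b) :
    (Int.gcd a (m ^ 2 - 1) : ℤ) ∣ b := by
  have hcop : IsCoprime (Int.gcd a (m ^ 2 - 1) : ℤ) m :=
    IsCoprime.of_isCoprime_of_dvd_left ⟨-1, m, by ring⟩ (Int.gcd_dvd_right _ _)
  exact hcop.dvd_of_dvd_mul_left ((Int.gcd_dvd_left _ _).trans h)

theorem mul_ediv_gcd_lt_ediv_gcd {a m : ℤ} (ha : 0 < a) (ham : a < m) :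
    m * (a / Int.gcd a (m ^ 2 - 1)) < (m ^ 2 - 1) / Int.gcd a (m ^ 2 - 1) := by
  set g : ℤ := ↑(Int.gcd a (m ^ 2 - 1))
  have hg : 0 < g := Int.natCast_pos.mpr (Int.gcd_pos_iff.mpr (Or.inl ha.ne'))
  have ha' := Int.mul_ediv_cancel' (Int.gcd_dvd_left a (m ^ 2 - 1))
  have hm' := Int.mul_ediv_cancel' (Int.gcd_dvd_right a (m ^ 2 - 1))
  refine lt_of_mul_lt_mul_left ?_ hg.le
  nlinarith

/-- **Corollary.** Asymmetric 3-digit palintiples singly-ρ-derived from a 2-digit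
`(n,b)`-palintiple `(d 1, d 0)`, with carry sequence `(d 0, d 1, 0)`. -/
theorem asym_existence_rho_from_two_digit (n b : ℤ) (d : ℕ → ℤ)
    (hp : IsPalintiple n b 1 d)
    (nh : ℤ) (hnh : max (d 0) (d 1) < nh)
    (hdvd : n * b - 1 ∣ nh * (b - n))
    (s : ℤ) (hs : s = nh * (b - n) / (n * b - 1))
    (hcong : s * d 0 ≡ d 1 [ZMOD nh - 1]) :
    ∀ α : ℤ, 1 ≤ α →
      ∃ dh ch : ℕ → ℤ,
        IsPalintiple nh (s + α * ((nh ^ 2 - 1) / (Int.gcd (d 1) (nh ^ 2 - 1) : ℤ))) 2 dh ∧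
        IsCarries nh (s + α * ((nh ^ 2 - 1) / (Int.gcd (d 1) (nh ^ 2 - 1) : ℤ))) 2 dh ch ∧
        IsAsym 2 ch ∧
        ch 0 = 0 ∧ ch 1 = d 1 ∧ ch 2 = d 0 ∧ ch 3 = 0 := by
  intro α hα
  have hd0 := hp.digit_zero_pos
  have hd1 : 0 < d 1 := hp.digit_last_pos
  have hd1nh : d 1 < nh := (le_max_right _ _).trans_lt hnh
  have hkey : nh * d 0 = s * d 1 := hs ▸ hp.mul_digit_zero_eq hdvd
  have hsd0 : d 0 < s := by nlinarith
  set g : ℤ := ↑(Int.gcd (d 1) (nh ^ 2 - 1))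
  have hd1g := Int.mul_ediv_cancel' (Int.gcd_dvd_left (d 1) (nh ^ 2 - 1))
  have hMg := Int.mul_ediv_cancel' (Int.gcd_dvd_right (d 1) (nh ^ 2 - 1))
  obtain ⟨e₀, he₀⟩ :=
    dvd_of_dvd_mul_of_gcd_sq_sub_one (a := d 1) (m := nh) (b := d 0) ⟨s, by rw [hkey, mul_comm]⟩
  have he : 0 < α * (d 1 / g) :=
    mul_pos (by linarith) (Int.ediv_pos_of_pos_of_dvd hd1 (by positivity) (Int.gcd_dvd_left _ _))
  have hlt := mul_ediv_gcd_lt_ediv_gcd hd1 hd1nh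
  refine exists_three_digit_of_carries hd0 hp.two_digit_lt hd1nh he (by nlinarith) ?_ ?_
  · linear_combination hkey - α * (d 1 / g) * hMg + α * ((nh ^ 2 - 1) / g) * hd1g
  · refine ⟨α * e₀ * (nh + 1) + (s * d 0 - d 1) / (nh - 1), ?_⟩
    linear_combination (α * ((nh ^ 2 - 1) / g)) * he₀ + α * e₀ * hMg -
      Int.mul_ediv_cancel' (Int.ModEq.dvd hcong.symm)
end

section
/- Let (d_k, ..., d_0) be an (n,b)-palintiple that is symmetric or shifted-symmetric, and let ξ ∈ ℂ with ξ ≠ 0, ξ ≠ b, and Pal(ξ) = 0, where Pal(X) = Σ_{j=0}^{k} (d_j − n·d_{k−j})·X^j is its palinomial. Then ξ is a root of both the digit polynomial and the reverse-digit polynomial: Σ_{j=0}^{k} d_j·ξ^j = 0 and Σ_{j=0}^{k} d_{k−j}·ξ^j = 0. -/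
open Finset Polynomial

/-!
With `C(X) = ∑ c_j X^j` the carry polynomial, the carry recurrence gives
`X · Pal(X) = (X - b) · C(X)`, so `C(ξ) = 0`. Reading the recurrence backwards, the reversed
palinomial `Pal*(X) = ∑ (d_{k-j} - n d_j) X^j` satisfies `X · Pal*(X) = (1 - bX) · C*(X)`
with `C*(X) = ∑ c_{k+1-j} X^j`, and (shifted) symmetry of the carries makes `C*` equal to
`X · C` (resp. `C`). Hence `D(ξ) - n R(ξ) = 0 = R(ξ) - n D(ξ)`, and `n² ≠ 1` forces
`D(ξ) = R(ξ) = 0`.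
-/

section Telescoping

variable {R : Type*} [CommRing R]

theorem mul_sum_range_succ_mul_pow (u : ℕ → R) (x : R) (m : ℕ) :
    x * ∑ j ∈ range m, u (j + 1) * x ^ j =
      ∑ j ∈ range m, u j * x ^ j + u m * x ^ m - u 0 := by
  have h₁ := sum_range_succ' (fun j => u j * x ^ j) m
  have h₂ := sum_range_succ (fun j => u j * x ^ j) m
  have h₃ : x * ∑ j ∈ range m, u (j + 1) * x ^ j =
      ∑ j ∈ range m, u (j + 1) * x ^ (j + 1) := by
    rw [mul_sum]
    exact sum_congr rfl fun j _ => by ring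
  simp only [pow_zero, mul_one] at h₁
  linear_combination h₃ - h₁ + h₂

theorem mul_sum_range_sub_mul_succ (u : ℕ → R) (b x : R) (m : ℕ) :
    x * ∑ j ∈ range m, (u j - b * u (j + 1)) * x ^ j =
      (x - b) * ∑ j ∈ range m, u j * x ^ j + b * (u 0 - u m * x ^ m) := by
  have h := mul_sum_range_succ_mul_pow u x m
  simp only [sub_mul, sum_sub_distrib, mul_assoc, ← mul_sum] at h ⊢
  linear_combination -b * h

theorem mul_sum_range_succ_sub_mul (u : ℕ → R) (b x : R) (m : ℕ) :
    x * ∑ j ∈ range m, (u (j + 1) - b * u j) * x ^ j =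
      (1 - b * x) * ∑ j ∈ range m, u j * x ^ j + u m * x ^ m - u 0 := by
  have h := mul_sum_range_succ_mul_pow u x m
  simp only [sub_mul, sum_sub_distrib, mul_assoc, ← mul_sum] at h ⊢
  linear_combination h

end Telescoping

theorem eq_zero_and_eq_zero_of_sub_mul {R : Type*} [CommRing R] [IsDomain R] {a F G : R}
    (ha : a ^ 2 ≠ 1) (hF : F - a * G = 0) (hG : G - a * F = 0) : F = 0 ∧ G = 0 := by
  have hF' : (1 - a ^ 2) * F = 0 := by linear_combination hF + a * hG
  have hF0 : F = 0 := (mul_eq_zero.mp hF').resolve_left (sub_ne_zero.mpr ha.symm)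
  exact ⟨hF0, by linear_combination hG + a * hF0⟩

namespace IsCarries

variable {R : Type*} [CommRing R] {n b : ℤ} {k : ℕ} {d c : ℕ → ℤ}

theorem digit_sub_mul_eq (hc : IsCarries n b k d c) {j : ℕ} (hj : j ≤ k) :
    (d j : R) - n * d (k - j) = c j - b * c (j + 1) := by
  have h : d j - n * d (k - j) = c j - b * c (j + 1) := by linarith [hc.2 j hj]
  exact_mod_cast congrArg (Int.cast : ℤ → R) h

theorem mul_palinomial_eq (hc : IsCarries n b k d c) (x : R) :
    x * ∑ j ∈ range (k + 1), ((d j : R) - n * d (k - j)) * x ^ j =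
      (x - b) * ∑ j ∈ range (k + 1), (c j : R) * x ^ j - b * c (k + 1) * x ^ (k + 1) := by
  rw [sum_congr rfl fun j hj => by
    rw [hc.digit_sub_mul_eq (Nat.lt_succ_iff.mp (mem_range.mp hj))]]
  rw [mul_sum_range_sub_mul_succ (fun j => (c j : R)), hc.1]
  push_cast
  ring

theorem mul_reverse_palinomial_eq (hc : IsCarries n b k d c) (hlast : c (k + 1) = 0) (x : R) :
    x * ∑ j ∈ range (k + 1), ((d (k - j) : R) - n * d j) * x ^ j =
      (1 - b * x) * ∑ j ∈ range (k + 1), (c (k + 1 - j) : R) * x ^ j := by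
  have hterm : ∀ j ∈ range (k + 1),
      ((d (k - j) : R) - n * d j) * x ^ j =
        ((c (k + 1 - (j + 1)) : R) - b * c (k + 1 - j)) * x ^ j := by
    intro j hj
    have hjk : j ≤ k := Nat.lt_succ_iff.mp (mem_range.mp hj)
    have h := hc.digit_sub_mul_eq (R := R) (Nat.sub_le k j)
    rw [Nat.sub_sub_self hjk] at h
    rw [h, Nat.add_sub_add_right, Nat.sub_add_comm hjk]
  rw [sum_congr rfl hterm, mul_sum_range_succ_sub_mul (fun j => (c (k + 1 - j) : R))]
  simp [hlast, hc.1]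

theorem carry_succ_eq_zero (hc : IsCarries n b k d c) (hp : IsPalintiple n b k d) :
    c (k + 1) = 0 := by
  obtain ⟨hn, hnb, -, -, -, -, hsum⟩ := hp
  have hpal : ∑ j ∈ range (k + 1), (d j - n * d (k - j)) * b ^ j = 0 := by
    simp only [sub_mul, sum_sub_distrib, mul_assoc, ← mul_sum, hsum, sub_self]
  have h := hc.mul_palinomial_eq (R := ℤ) b
  simp only [Int.cast_id, hpal, mul_zero, sub_self, zero_mul, zero_sub, zero_eq_neg] at h
  have hb : b ≠ 0 := by omega
  simpa [hb] using h

end IsCarries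

theorem IsSym.sum_carry_reverse_eq {R : Type*} [CommRing R] {k : ℕ} {c : ℕ → ℤ}
    (hs : IsSym k c) (hc0 : c 0 = 0) (hlast : c (k + 1) = 0) (x : R) :
    ∑ j ∈ range (k + 1), (c (k + 1 - j) : R) * x ^ j =
      x * ∑ j ∈ range (k + 1), (c j : R) * x ^ j := by
  have hck : c k = 0 := by simpa [hc0] using hs k le_rfl
  rw [sum_range_succ', sum_range_succ, hck]
  simp only [Nat.add_sub_add_right, Nat.sub_zero, hlast, Int.cast_zero, zero_mul, add_zero,
    mul_sum]
  exact sum_congr rfl fun j hj => by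
    rw [← hs j (mem_range.mp hj).le, pow_succ]
    ring

theorem IsShiftedSym.sum_carry_reverse_eq {R : Type*} [CommRing R] {k : ℕ} {c : ℕ → ℤ}
    (hs : IsShiftedSym k c) (x : R) :
    ∑ j ∈ range (k + 1), (c (k + 1 - j) : R) * x ^ j = ∑ j ∈ range (k + 1), (c j : R) * x ^ j :=
  sum_congr rfl fun j hj => by
    have hjk : j ≤ k := Nat.lt_succ_iff.mp (mem_range.mp hj)
    rw [hs j hjk, Nat.sub_add_comm hjk]

/-- **Theorem.** A nonzero root `ξ ≠ b` of the palinomial of a symmetric or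
shifted-symmetric palintiple is a common root of the digit and reverse-digit
polynomials. -/
theorem palinomial_root_is_digit_root (n b : ℤ) (k : ℕ) (d c : ℕ → ℤ)
    (hp : IsPalintiple n b k d) (hc : IsCarries n b k d c)
    (hsym : IsSym k c ∨ IsShiftedSym k c)
    (ξ : ℂ) (hξ0 : ξ ≠ 0) (hξb : ξ ≠ (b : ℂ))
    (hroot : ∑ j ∈ range (k + 1), ((d j : ℂ) - (n : ℂ) * (d (k - j) : ℂ)) * ξ ^ j = 0) :
    (∑ j ∈ range (k + 1), (d j : ℂ) * ξ ^ j = 0) ∧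
    (∑ j ∈ range (k + 1), (d (k - j) : ℂ) * ξ ^ j = 0) := by
  have hlast := hc.carry_succ_eq_zero hp
  have hC : ∑ j ∈ range (k + 1), (c j : ℂ) * ξ ^ j = 0 := by
    have h := hc.mul_palinomial_eq ξ
    simp only [hroot, hlast, mul_zero, Int.cast_zero, zero_mul, sub_zero] at h
    exact (mul_eq_zero.mp h.symm).resolve_left (sub_ne_zero.mpr hξb)
  have hCrev : ∑ j ∈ range (k + 1), (c (k + 1 - j) : ℂ) * ξ ^ j = 0 := by
    rcases hsym with hs | hs
    · rw [hs.sum_carry_reverse_eq hc.1 hlast, hC, mul_zero]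
    · rw [hs.sum_carry_reverse_eq, hC]
  have hrev : ∑ j ∈ range (k + 1), ((d (k - j) : ℂ) - n * d j) * ξ ^ j = 0 := by
    have h := hc.mul_reverse_palinomial_eq hlast ξ
    rw [hCrev, mul_zero] at h
    exact (mul_eq_zero.mp h).resolve_left hξ0
  have hn : (n : ℂ) ^ 2 ≠ 1 := by
    have : n ^ 2 ≠ 1 := by nlinarith [hp.1]
    exact_mod_cast this
  simp only [sub_mul, sum_sub_distrib, mul_assoc, ← mul_sum] at hroot hrev
  exact eq_zero_and_eq_zero_of_sub_mul hn hroot hrev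
end
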